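/- Let g be a probability density on ℝ with finite second moment, g ∈ L¹(ℝ) ∩ C⁰(ℝ) and zero mean, and let f be the probability density whose Fourier transform is f̂(ξ) = ∏_{j=0}^{∞} ĝ(ξ/2^j)^{2^j}. Then the second moment of f equals twice the second moment of g: ∫_ℝ x² f(x) dx = 2∫_ℝ x² g(x) dx. -/

import Mathlib

open MeasureTheory Real

/-- Fourier transform `ĥ(ξ) = ∫ h(x) e^{-iξx} dx`. -/
noncomputable def ft (h : ℝ → ℝ) (ξ : ℝ) : ℂ :=
  ∫ x : ℝ, (h x : ℂ) * Complex.exp (-(Complex.I * ξ * x))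

/-!
For a probability density `h` with finite second moment, the quotient
`Q_h(ξ) = 2 (1 - Re ĥ(ξ)) / ξ²` tends to `∫ x² h` as `ξ → 0` (dominated convergence).
The product formula gives the functional equation `f̂(ξ) = ĝ(ξ) f̂(ξ/2)²`. Since `g` has mean zero,
`ĝ(ξ) = 1 + O(ξ²)`, and bounding the product factor by factor gives `f̂(ξ) = 1 + O(ξ²)` too (the
functional equation alone would not do this: it does not fix the mean of `f`). Linearising the
functional equation then gives `Q_f(ξ) = Q_g(ξ) + Q_f(ξ/2) / 2 + O(ξ²)`, and letting `ξ → 0`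
yields `m_f = m_g + m_f / 2` for the second moments.
-/

open Filter Topology Finset

section ProductBounds

variable {ι R : Type*} [SeminormedCommRing R]

lemma Finset.norm_prod_sub_one_le_sum (s : Finset ι) {a : ι → R} (ha : ∀ i, ‖a i‖ ≤ 1) :
    ‖∏ i ∈ s, a i - 1‖ ≤ ∑ i ∈ s, ‖a i - 1‖ := by
  induction s using Finset.cons_induction with
  | empty => simp
  | cons k s hk ih =>
    rw [prod_cons, sum_cons]
    calc ‖a k * ∏ i ∈ s, a i - 1‖ = ‖a k * (∏ i ∈ s, a i - 1) + (a k - 1)‖ := by ring_nf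
      _ ≤ ‖a k‖ * ‖∏ i ∈ s, a i - 1‖ + ‖a k - 1‖ := norm_add_le_of_le (norm_mul_le _ _) le_rfl
      _ ≤ ‖a k - 1‖ + ∑ i ∈ s, ‖a i - 1‖ := by
        nlinarith [norm_nonneg (∏ i ∈ s, a i - 1), ha k]

lemma norm_pow_sub_one_le {z : R} (hz : ‖z‖ ≤ 1) (n : ℕ) : ‖z ^ n - 1‖ ≤ n * ‖z - 1‖ := by
  simpa using (range n).norm_prod_sub_one_le_sum (a := fun _ => z) fun _ => hz

lemma norm_tprod_sub_one_le {a : ι → R} (ha : ∀ i, ‖a i‖ ≤ 1)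
    (hs : Summable fun i => ‖a i - 1‖) : ‖∏' i, a i - 1‖ ≤ ∑' i, ‖a i - 1‖ := by
  by_cases hm : Multipliable a
  · exact le_of_tendsto' (hm.hasProd.sub_const 1).norm fun s =>
      (s.norm_prod_sub_one_le_sum ha).trans (hs.sum_le_tsum s fun i _ => norm_nonneg _)
  · rw [tprod_eq_one_of_not_multipliable hm, sub_self, norm_zero]
    exact tsum_nonneg fun i => norm_nonneg _

end ProductBounds

noncomputable def halvingProduct (ψ : ℝ → ℂ) (ξ : ℝ) : ℂ := ∏' j : ℕ, ψ (ξ / 2 ^ j) ^ 2 ^ j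

section HalvingProduct

variable {ψ : ℝ → ℂ} {B : ℝ}

lemma norm_pow_two_pow_sub_one_le (hψ : ∀ η, ‖ψ η‖ ≤ 1) (hB : ∀ η, ‖ψ η - 1‖ ≤ B * η ^ 2)
    (ξ : ℝ) (j : ℕ) : ‖ψ (ξ / 2 ^ j) ^ 2 ^ j - 1‖ ≤ B * ξ ^ 2 * (1 / 2) ^ j :=
  calc ‖ψ (ξ / 2 ^ j) ^ 2 ^ j - 1‖ ≤ (2 ^ j : ℕ) * ‖ψ (ξ / 2 ^ j) - 1‖ :=
        norm_pow_sub_one_le (hψ _) _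
    _ ≤ 2 ^ j * (B * (ξ / 2 ^ j) ^ 2) := by push_cast; gcongr; exact hB _
    _ = B * ξ ^ 2 * (1 / 2) ^ j := by rw [one_div_pow]; field_simp

lemma summable_norm_pow_two_pow_sub_one (hψ : ∀ η, ‖ψ η‖ ≤ 1)
    (hB : ∀ η, ‖ψ η - 1‖ ≤ B * η ^ 2) (ξ : ℝ) :
    Summable fun j : ℕ => ‖ψ (ξ / 2 ^ j) ^ 2 ^ j - 1‖ :=
  .of_nonneg_of_le (fun _ => norm_nonneg _) (norm_pow_two_pow_sub_one_le hψ hB ξ)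
    (summable_geometric_two.mul_left _)

lemma multipliable_pow_two_pow (hψ : ∀ η, ‖ψ η‖ ≤ 1) (hB : ∀ η, ‖ψ η - 1‖ ≤ B * η ^ 2)
    (ξ : ℝ) : Multipliable fun j : ℕ => ψ (ξ / 2 ^ j) ^ 2 ^ j := by
  simpa using multipliable_one_add_of_summable (summable_norm_pow_two_pow_sub_one hψ hB ξ)

lemma norm_halvingProduct_sub_one_le (hψ : ∀ η, ‖ψ η‖ ≤ 1)
    (hB : ∀ η, ‖ψ η - 1‖ ≤ B * η ^ 2) (ξ : ℝ) :
    ‖halvingProduct ψ ξ - 1‖ ≤ 2 * B * ξ ^ 2 :=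
  calc ‖halvingProduct ψ ξ - 1‖ ≤ ∑' j : ℕ, ‖ψ (ξ / 2 ^ j) ^ 2 ^ j - 1‖ :=
        norm_tprod_sub_one_le (fun j => by rw [norm_pow]; exact pow_le_one₀ (norm_nonneg _) (hψ _))
          (summable_norm_pow_two_pow_sub_one hψ hB ξ)
    _ ≤ ∑' j : ℕ, B * ξ ^ 2 * (1 / 2) ^ j :=
        (summable_norm_pow_two_pow_sub_one hψ hB ξ).tsum_le_tsum
          (norm_pow_two_pow_sub_one_le hψ hB ξ) (summable_geometric_two.mul_left _)
    _ = 2 * B * ξ ^ 2 := by rw [tsum_mul_left, tsum_geometric_two]; ring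

lemma halvingProduct_eq_mul_sq (hψ : ∀ η, ‖ψ η‖ ≤ 1) (hB : ∀ η, ‖ψ η - 1‖ ≤ B * η ^ 2)
    (ξ : ℝ) : halvingProduct ψ ξ = ψ ξ * halvingProduct ψ (ξ / 2) ^ 2 := by
  have hm := multipliable_pow_two_pow hψ hB (ξ / 2)
  have hshift : (fun j : ℕ => ψ (ξ / 2 ^ (j + 1)) ^ 2 ^ (j + 1))
      = fun j => (ψ (ξ / 2 / 2 ^ j) ^ 2 ^ j) ^ 2 := by
    ext j
    rw [← pow_mul, ← pow_succ, div_div, ← pow_succ']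
  rw [halvingProduct, tprod_eq_zero_mul' (by rw [hshift]; exact hm.pow 2), hshift,
    hm.tprod_pow, halvingProduct]
  simp

end HalvingProduct

lemma tendsto_const_mul_sq_nhdsNE_zero (K : ℝ) :
    Tendsto (fun ξ : ℝ => K * ξ ^ 2) (𝓝[≠] 0) (𝓝 0) := by
  simpa using ((continuous_pow 2).tendsto' (0 : ℝ) 0 (by simp)).const_mul K
    |>.mono_left nhdsWithin_le_nhds

lemma tendsto_div_two_nhdsNE_zero : Tendsto (fun ξ : ℝ => ξ / 2) (𝓝[≠] 0) (𝓝[≠] 0) :=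
  tendsto_nhdsWithin_of_tendsto_nhds_of_eventually_within _
    (by simpa using ((tendsto_id (x := 𝓝 (0 : ℝ))).div_const (2 : ℝ)).mono_left nhdsWithin_le_nhds)
    (eventually_nhdsWithin_of_forall fun _ hξ => div_ne_zero hξ two_ne_zero)

noncomputable def secondMomentQuotient (φ : ℝ → ℂ) (ξ : ℝ) : ℝ := 2 * (1 - (φ ξ).re) / ξ ^ 2

lemma norm_mul_sq_sub_linear_le {p q : ℂ} (hq : ‖q‖ ≤ 1) :
    ‖q * p ^ 2 - 1 - (q - 1) - 2 * (p - 1)‖ ≤ ‖p - 1‖ * (2 * ‖q - 1‖ + ‖p - 1‖) := by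
  have h : q * p ^ 2 - 1 - (q - 1) - 2 * (p - 1) = (p - 1) * (2 * (q - 1) + q * (p - 1)) := by
    ring
  rw [h, norm_mul]
  gcongr
  calc ‖2 * (q - 1) + q * (p - 1)‖ ≤ ‖2 * (q - 1)‖ + ‖q * (p - 1)‖ := norm_add_le _ _
    _ ≤ 2 * ‖q - 1‖ + 1 * ‖p - 1‖ := by
      rw [norm_mul, norm_mul, Complex.norm_two]; gcongr
    _ = 2 * ‖q - 1‖ + ‖p - 1‖ := by rw [one_mul]

lemma tendsto_secondMomentQuotient_sub {φ ψ : ℝ → ℂ} {A B : ℝ} (hψ : ∀ ξ, ‖ψ ξ‖ ≤ 1)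
    (hφψ : ∀ ξ, φ ξ = ψ ξ * φ (ξ / 2) ^ 2) (hA : ∀ ξ, ‖φ ξ - 1‖ ≤ A * ξ ^ 2)
    (hB : ∀ ξ, ‖ψ ξ - 1‖ ≤ B * ξ ^ 2) :
    Tendsto (fun ξ => secondMomentQuotient φ ξ - secondMomentQuotient ψ ξ
      - secondMomentQuotient φ (ξ / 2) / 2) (𝓝[≠] 0) (𝓝 0) := by
  refine squeeze_zero_norm' (eventually_nhdsWithin_of_forall fun ξ (hξ : ξ ≠ 0) => ?_)
    (tendsto_const_mul_sq_nhdsNE_zero (A * (8 * B + A) / 8))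
  set E := φ ξ - 1 - (ψ ξ - 1) - 2 * (φ (ξ / 2) - 1)
  have hE : ‖E‖ ≤ A * ξ ^ 2 / 4 * (2 * (B * ξ ^ 2) + A * ξ ^ 2 / 4) := by
    have hp : ‖φ (ξ / 2) - 1‖ ≤ A * ξ ^ 2 / 4 := (hA _).trans_eq (by ring)
    calc ‖E‖ ≤ ‖φ (ξ / 2) - 1‖ * (2 * ‖ψ ξ - 1‖ + ‖φ (ξ / 2) - 1‖) := by
          simpa only [E, hφψ ξ] using norm_mul_sq_sub_linear_le (p := φ (ξ / 2)) (hψ ξ)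
      _ ≤ _ := by
          gcongr
          · exact (norm_nonneg _).trans hp
          · exact hB ξ
  have hre : secondMomentQuotient φ ξ - secondMomentQuotient ψ ξ
      - secondMomentQuotient φ (ξ / 2) / 2 = -(2 / ξ ^ 2 * E.re) := by
    simp only [secondMomentQuotient, E, Complex.sub_re, Complex.one_re, Complex.mul_re,
      Complex.re_ofNat, Complex.im_ofNat, zero_mul, sub_zero]
    field_simp
    ring
  rw [hre, norm_neg, norm_mul, Real.norm_of_nonneg (by positivity)]
  calc 2 / ξ ^ 2 * ‖E.re‖ ≤ 2 / ξ ^ 2 * ‖E‖ := by gcongr; exact Complex.abs_re_le_norm E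
    _ ≤ 2 / ξ ^ 2 * (A * ξ ^ 2 / 4 * (2 * (B * ξ ^ 2) + A * ξ ^ 2 / 4)) := by gcongr
    _ = A * (8 * B + A) / 8 * ξ ^ 2 := by field_simp; ring

section Density

variable {h : ℝ → ℝ}

lemma neg_I_mul_mul_eq_I_mul (ξ x : ℝ) :
    -(Complex.I * ξ * x) = Complex.I * ((-(ξ * x) : ℝ) : ℂ) := by
  push_cast; ring

lemma norm_ofReal_mul_cexp (ξ x : ℝ) :
    ‖(h x : ℂ) * Complex.exp (-(Complex.I * ξ * x))‖ = ‖h x‖ := by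
  rw [norm_mul, neg_I_mul_mul_eq_I_mul, Complex.norm_exp_I_mul_ofReal, mul_one, Complex.norm_real]

lemma integrable_ofReal_mul_cexp (hi : Integrable h) (ξ : ℝ) :
    Integrable fun x => (h x : ℂ) * Complex.exp (-(Complex.I * ξ * x)) :=
  hi.ofReal.mul_bdd (by fun_prop) (ae_of_all _ fun x => by
    rw [neg_I_mul_mul_eq_I_mul, Complex.norm_exp_I_mul_ofReal])

lemma norm_ft_le_one (h0 : ∀ x, 0 ≤ h x) (hmass : ∫ x, h x = 1) (ξ : ℝ) : ‖ft h ξ‖ ≤ 1 := by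
  refine (norm_integral_le_integral_norm _).trans_eq ?_
  simp only [norm_ofReal_mul_cexp, Real.norm_of_nonneg (h0 _), hmass]

lemma one_sub_re_ft (hi : Integrable h) (hmass : ∫ x, h x = 1) (ξ : ℝ) :
    1 - (ft h ξ).re = ∫ x, h x * (1 - cos (ξ * x)) := by
  have hre : (ft h ξ).re = ∫ x, h x * cos (ξ * x) := by
    rw [ft, ← RCLike.re_eq_complex_re, ← integral_re (integrable_ofReal_mul_cexp hi ξ)]
    congr 1 with x
    simp [neg_I_mul_mul_eq_I_mul, Complex.exp_re]
  simp_rw [hre, mul_one_sub]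
  rw [integral_sub hi (hi.mul_bdd (by fun_prop) (ae_of_all _ fun x => abs_cos_le_one _)), hmass]

lemma tendsto_two_mul_one_sub_cos_div_sq (x : ℝ) :
    Tendsto (fun ξ => 2 * (1 - cos (ξ * x)) / ξ ^ 2) (𝓝[≠] 0) (𝓝 (x ^ 2)) := by
  have hsmall : ∀ᶠ ξ in 𝓝[≠] (0 : ℝ), |ξ * x| ≤ 1 := by
    have : Tendsto (fun ξ : ℝ => ξ * x) (𝓝 0) (𝓝 0) := by
      simpa using (tendsto_id (x := 𝓝 (0 : ℝ))).mul_const x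
    simpa using (this.eventually (Metric.closedBall_mem_nhds 0 one_pos)).filter_mono
      nhdsWithin_le_nhds
  refine tendsto_sub_nhds_zero_iff.mp
    (squeeze_zero_norm' ?_ (tendsto_const_mul_sq_nhdsNE_zero (5 / 48 * x ^ 4)))
  filter_upwards [hsmall, self_mem_nhdsWithin] with ξ hξx (hξ : ξ ≠ 0)
  have hcos := cos_bound hξx
  have heq : 2 * (1 - cos (ξ * x)) / ξ ^ 2 - x ^ 2
      = -(2 / ξ ^ 2) * (cos (ξ * x) - (1 - (ξ * x) ^ 2 / 2)) := by
    field_simp; ring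
  rw [heq, norm_mul, norm_neg, Real.norm_of_nonneg (by positivity), Real.norm_eq_abs]
  calc 2 / ξ ^ 2 * |cos (ξ * x) - (1 - (ξ * x) ^ 2 / 2)|
        ≤ 2 / ξ ^ 2 * (|ξ * x| ^ 4 * (5 / 96)) := by gcongr
    _ = 5 / 48 * x ^ 4 * ξ ^ 2 := by
        rw [pow_abs, abs_of_nonneg (by positivity)]; field_simp; ring

lemma tendsto_secondMomentQuotient_ft (h0 : ∀ x, 0 ≤ h x) (hi : Integrable h)
    (hmass : ∫ x, h x = 1) (hm2 : Integrable fun x => x ^ 2 * h x) :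
    Tendsto (secondMomentQuotient (ft h)) (𝓝[≠] 0) (𝓝 (∫ x, x ^ 2 * h x)) := by
  have hdom : Tendsto (fun ξ => ∫ x, 2 * (1 - cos (ξ * x)) / ξ ^ 2 * h x) (𝓝[≠] 0)
      (𝓝 (∫ x, x ^ 2 * h x)) := by
    refine tendsto_integral_filter_of_dominated_convergence _
      (Eventually.of_forall fun ξ => by fun_prop) ?_ hm2
      (ae_of_all _ fun x => (tendsto_two_mul_one_sub_cos_div_sq x).mul_const (h x))
    filter_upwards [self_mem_nhdsWithin] with ξ (hξ : ξ ≠ 0)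
    refine ae_of_all _ fun x => ?_
    have hcos : 0 ≤ 1 - cos (ξ * x) := sub_nonneg.mpr (cos_le_one _)
    rw [Real.norm_of_nonneg (by have := h0 x; positivity)]
    gcongr
    · exact h0 x
    · rw [div_le_iff₀ (by positivity)]
      nlinarith [one_sub_sq_div_two_le_cos (x := ξ * x)]
  refine hdom.congr' (eventually_nhdsWithin_of_forall fun ξ (hξ : ξ ≠ 0) => ?_)
  rw [secondMomentQuotient, one_sub_re_ft hi hmass, ← integral_const_mul, ← integral_div]
  congr 1 with x
  ring

lemma norm_cexp_I_mul_sub_one_sub_le (t : ℝ) :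
    ‖Complex.exp (Complex.I * t) - 1 - Complex.I * t‖ ≤ 2 * t ^ 2 := by
  have hnorm : ‖Complex.I * t‖ = |t| := by simp
  rcases le_or_gt |t| 1 with ht | ht
  · calc ‖Complex.exp (Complex.I * t) - 1 - Complex.I * t‖ ≤ ‖Complex.I * t‖ ^ 2 :=
          Complex.norm_exp_sub_one_sub_id_le (hnorm.trans_le ht)
      _ ≤ 2 * t ^ 2 := by rw [hnorm, sq_abs]; nlinarith [sq_nonneg t]
  · calc ‖Complex.exp (Complex.I * t) - 1 - Complex.I * t‖
          ≤ ‖Complex.exp (Complex.I * t) - 1‖ + ‖Complex.I * t‖ := norm_sub_le _ _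
      _ ≤ |t| + |t| := by
          rw [hnorm]; gcongr; simpa using norm_exp_I_mul_ofReal_sub_one_le (x := t)
      _ ≤ 2 * t ^ 2 := by nlinarith [sq_abs t]

lemma integrable_mul_of_integrable_sq_mul (hi : Integrable h)
    (hm2 : Integrable fun x => x ^ 2 * h x) : Integrable fun x => x * h x := by
  refine (hi.norm.add hm2.norm).mono' (by fun_prop) (ae_of_all _ fun x => ?_)
  simp only [Pi.add_apply, norm_mul, norm_pow, Real.norm_eq_abs, sq_abs]
  have hx : |x| ≤ 1 + x ^ 2 := by nlinarith [sq_abs x, abs_nonneg x]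
  nlinarith [mul_le_mul_of_nonneg_right hx (abs_nonneg (h x))]

lemma norm_ft_sub_one_le (h0 : ∀ x, 0 ≤ h x) (hi : Integrable h) (hmass : ∫ x, h x = 1)
    (hm2 : Integrable fun x => x ^ 2 * h x) (hmean : ∫ x, x * h x = 0) (ξ : ℝ) :
    ‖ft h ξ - 1‖ ≤ 2 * (∫ x, x ^ 2 * h x) * ξ ^ 2 := by
  have hcexp := integrable_ofReal_mul_cexp hi ξ
  have hlin : Integrable fun x => Complex.I * ξ * ((x * h x : ℝ) : ℂ) :=
    (integrable_mul_of_integrable_sq_mul hi hm2).ofReal.const_mul _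
  have hsplit : ft h ξ - 1 = ∫ x, ((h x : ℂ) * Complex.exp (-(Complex.I * ξ * x)) - h x
      + Complex.I * ξ * ((x * h x : ℝ) : ℂ)) := by
    rw [integral_add (f := fun x => _ - _) (hcexp.sub hi.ofReal) hlin,
      integral_sub (g := fun x => (h x : ℂ)) hcexp hi.ofReal, integral_const_mul,
      integral_complex_ofReal, integral_complex_ofReal, hmass, hmean, ft]
    simp
  have hpointwise : ∀ x, ‖(h x : ℂ) * Complex.exp (-(Complex.I * ξ * x)) - h x
      + Complex.I * ξ * ((x * h x : ℝ) : ℂ)‖ ≤ 2 * ξ ^ 2 * (x ^ 2 * h x) := by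
    intro x
    have hfactor : (h x : ℂ) * Complex.exp (-(Complex.I * ξ * x)) - h x
        + Complex.I * ξ * ((x * h x : ℝ) : ℂ)
        = h x * (Complex.exp (Complex.I * ((-(ξ * x) : ℝ) : ℂ))
          - 1 - Complex.I * ((-(ξ * x) : ℝ) : ℂ)) := by
      rw [neg_I_mul_mul_eq_I_mul]; push_cast; ring
    rw [hfactor, norm_mul, Complex.norm_real, Real.norm_of_nonneg (h0 x)]
    calc h x * ‖Complex.exp (Complex.I * ((-(ξ * x) : ℝ) : ℂ)) - 1
          - Complex.I * ((-(ξ * x) : ℝ) : ℂ)‖ ≤ h x * (2 * (-(ξ * x)) ^ 2) := by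
          gcongr
          · exact h0 x
          · exact norm_cexp_I_mul_sub_one_sub_le _
      _ = 2 * ξ ^ 2 * (x ^ 2 * h x) := by ring
  rw [hsplit]
  refine (norm_integral_le_of_norm_le (hm2.const_mul _) (ae_of_all _ hpointwise)).trans_eq ?_
  rw [integral_const_mul]
  ring

end Density

theorem stmt_3 (g : ℝ → ℝ)
    (hg_nonneg : ∀ x, 0 ≤ g x)
    (hg_int : Integrable g)
    (hg_mass : ∫ x : ℝ, g x = 1)
    (hg_mom2 : Integrable (fun x => x ^ 2 * g x))
    (hg_mean : (∫ x : ℝ, x * g x) = 0)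
    (f : ℝ → ℝ)
    (hf_nonneg : ∀ x, 0 ≤ f x)
    (hf_int : Integrable f)
    (hf_mass : ∫ x : ℝ, f x = 1)
    (hf_mom2 : Integrable (fun x => x ^ 2 * f x))
    (hft : ∀ ξ : ℝ, ft f ξ = ∏' j : ℕ, (ft g (ξ / 2 ^ j)) ^ (2 ^ j : ℕ)) :
    (∫ x : ℝ, x ^ 2 * f x) = 2 * ∫ x : ℝ, x ^ 2 * g x := by
  have hf : ft f = halvingProduct (ft g) := funext hft
  have hg_le_one := norm_ft_le_one hg_nonneg hg_mass
  have hg_quad := norm_ft_sub_one_le hg_nonneg hg_int hg_mass hg_mom2 hg_mean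
  have hf_quad : ∀ ξ, ‖ft f ξ - 1‖ ≤ 2 * (2 * ∫ x, x ^ 2 * g x) * ξ ^ 2 :=
    hf ▸ norm_halvingProduct_sub_one_le hg_le_one hg_quad
  have hf_eq : ∀ ξ, ft f ξ = ft g ξ * ft f (ξ / 2) ^ 2 :=
    hf ▸ halvingProduct_eq_mul_sq hg_le_one hg_quad
  have hQf := tendsto_secondMomentQuotient_ft hf_nonneg hf_int hf_mass hf_mom2
  have hQg := tendsto_secondMomentQuotient_ft hg_nonneg hg_int hg_mass hg_mom2
  have hlim := tendsto_nhds_unique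
    ((hQf.sub hQg).sub ((hQf.comp tendsto_div_two_nhdsNE_zero).div_const 2))
    (tendsto_secondMomentQuotient_sub hg_le_one hf_eq hf_quad hg_quad)
  linarith
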